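/- Let Ω ⊂ P(ℝ^d) be a properly convex domain, S ⊂ Ω a properly embedded simplex, and H a set of S-supporting hyperplanes with associated linear projection L_{S,H}. If x ∈ F_Ω(∂S) (i.e., x lies in the open face F_Ω(y) of some y ∈ ∂S), then L_{S,H}(x) ∈ F_Ω(x). -/

import Mathlib

open Set Filter Topology

/-- `ℝ^d`, the vector space underlying `P(ℝ^d)`. -/
abbrev Ed (d : ℕ) := Fin d → ℝ

/-- The open convex cone `C ⊆ ℝ^d` representing a properly convex domain
`Ω ⊆ P(ℝ^d)` (so `π⁻¹(Ω) = C ∪ -C`): `C` is open, convex, nonempty, invariant under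
positive scaling, and proper (`C ∩ -C = ∅`). -/
def IsProperConeDomain {d : ℕ} (C : Set (Ed d)) : Prop :=
  IsOpen C ∧ Convex ℝ C ∧ C.Nonempty ∧
    (∀ x ∈ C, ∀ r : ℝ, 0 < r → r • x ∈ C) ∧ C ∩ (-C) = ∅

/-- The open cone over the rays `u 0, …, u (q-1)`: the cone representing the open
projective simplex with vertices `[u i]`. -/
def coneSimplexOf {d q : ℕ} (u : Fin q → Ed d) : Set (Ed d) :=
  {x | ∃ t : Fin q → ℝ, (∀ i, 0 < t i) ∧ x = ∑ i, t i • u i}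

/-- The cone over the `j`-th maximal boundary face of the simplex with vertices `[u i]`
(the face opposite the vertex `[u j]`). -/
def coneSimplexFace {d q : ℕ} (u : Fin q → Ed d) (j : Fin q) : Set (Ed d) :=
  {x | ∃ t : Fin q → ℝ, (∀ i, 0 < t i) ∧ x = ∑ i ∈ Finset.univ.erase j, t i • u i}

/-- The cone over the boundary `∂S` of the projective simplex with vertices `[u i]`. -/
def coneSimplexBoundary {d q : ℕ} (u : Fin q → Ed d) : Set (Ed d) :=
  {x | ∃ t : Fin q → ℝ, (∀ i, 0 ≤ t i) ∧ (∃ i, t i = 0) ∧ (∃ i, 0 < t i) ∧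
    x = ∑ i, t i • u i}

/-- `[H]` is a supporting hyperplane of the projective domain with cone `C`:
`H` is a linear hyperplane with `[H] ∩ Ω = ∅` and `[H] ∩ ∂Ω ≠ ∅`. -/
def IsSupportingHyperplane {d : ℕ} (C : Set (Ed d)) (H : Submodule ℝ (Ed d)) : Prop :=
  Module.finrank ℝ H = d - 1 ∧ (H : Set (Ed d)) ∩ C = ∅ ∧
    ((H : Set (Ed d)) ∩ (closure C \ (C ∪ {0}))).Nonempty

/-- A set of `S`-supporting hyperplanes for the properly embedded simplex with vertex
rays `u`: each `[H j]` is a supporting hyperplane of `Ω` containing the `j`-th maximal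
boundary face of `S`. -/
def IsSSupporting {d q : ℕ} (C : Set (Ed d)) (u : Fin q → Ed d)
    (H : Fin q → Submodule ℝ (Ed d)) : Prop :=
  ∀ j, IsSupportingHyperplane C (H j) ∧ coneSimplexFace u j ⊆ (H j : Set (Ed d))

/-- The simplex with vertex rays `u` is properly embedded in the domain with cone `C`. -/
def IsConePESOf {d q : ℕ} (C : Set (Ed d)) (u : Fin q → Ed d) : Prop :=
  LinearIndependent ℝ u ∧ coneSimplexOf u ⊆ C ∧
    closure (coneSimplexOf u) ∩ C = coneSimplexOf u

/-- The open face `F_Ω(x)` of a boundary ray, in the cone model: `y ∈ F(x)` iff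
(after rescaling `y`) `x` and `y` lie on a common open segment inside `cl C`. -/
def coneFace {d : ℕ} (C : Set (Ed d)) (x : Ed d) : Set (Ed d) :=
  {y | y ∈ closure C ∧ ∃ r δ : ℝ, 0 < r ∧ 0 < δ ∧
    x + δ • (x - r • y) ∈ closure C ∧ r • y + δ • (r • y - x) ∈ closure C}

/-- All nonzero multiples of elements of `A`: two subsets of `ℝ^d ∖ {0}` determine the
same subset of `P(ℝ^d)` iff they have the same `projSaturation`. -/
def projSaturation {d : ℕ} (A : Set (Ed d)) : Set (Ed d) :=
  {y | ∃ x ∈ A, ∃ r : ℝ, r ≠ 0 ∧ y = r • x}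

private lemma smul_mem_closure' {d : ℕ} {C : Set (Ed d)} (hC : IsProperConeDomain C)
    {x : Ed d} (hx : x ∈ closure C) {r : ℝ} (hr : 0 < r) : r • x ∈ closure C :=
  map_mem_closure (continuous_const_smul r) hx (fun y hy => hC.2.2.2.1 y hy r hr)

private lemma shrink' {d : ℕ} {C : Set (Ed d)} (hC : IsProperConeDomain C)
    {x v : Ed d} (hx : x ∈ closure C) {t : ℝ} (hxt : x + t • v ∈ closure C)
    {e : ℝ} (he0 : 0 ≤ e) (het : e ≤ t) : x + e • v ∈ closure C := by
  rcases eq_or_lt_of_le (he0.trans het) with ht0 | ht0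
  · have he : e = 0 := le_antisymm (het.trans ht0.symm.le) he0
    simpa [he] using hx
  · have h : e / t * t = e := div_mul_cancel₀ e (ne_of_gt ht0)
    have key : (1 - e/t) • x + (e/t) • (x + t • v) = x + (e/t*t) • v := by module
    rw [h] at key
    rw [← key]
    exact hC.2.1.closure hx hxt
      (by rw [sub_nonneg]; exact (div_le_one ht0).mpr het)
      (by positivity) (by ring)

private lemma sum_mem_closure' {d q : ℕ} {C : Set (Ed d)} {u : Fin q → Ed d}
    (hsub : coneSimplexOf u ⊆ C) {s : Fin q → ℝ} (hs : ∀ i, 0 ≤ s i) :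
    ∑ i, s i • u i ∈ closure C := by
  have hmem : ∀ n : ℕ, (∑ i, s i • u i) + (1/((n:ℝ)+1)) • ∑ i, u i ∈ C := by
    intro n
    apply hsub
    refine ⟨fun i => s i + 1/((n:ℝ)+1), fun i => add_pos_of_nonneg_of_pos (hs i) (by positivity), ?_⟩
    rw [Finset.smul_sum, ← Finset.sum_add_distrib]
    exact Finset.sum_congr rfl fun i _ => (add_smul _ _ _).symm
  have ht : Filter.Tendsto (fun n : ℕ => (∑ i, s i • u i) + (1/((n:ℝ)+1)) • ∑ i, u i)
      Filter.atTop (nhds (∑ i, s i • u i)) := by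
    have h1 : Filter.Tendsto (fun n : ℕ => 1/((n:ℝ)+1)) Filter.atTop (nhds 0) :=
      tendsto_one_div_add_atTop_nhds_zero_nat
    have h2 := (h1.smul_const (∑ i, u i)).const_add (∑ i, s i • u i)
    simpa using h2
  exact mem_closure_of_tendsto ht (Filter.Eventually.of_forall hmem)

private lemma exists_functional' {d : ℕ} {C : Set (Ed d)} (hC : IsProperConeDomain C)
    {H : Submodule ℝ (Ed d)} (hdisj : (H : Set (Ed d)) ∩ C = ∅) :
    ∃ f : Ed d →L[ℝ] ℝ, (∀ w ∈ C, 0 < f w) ∧ ∀ w ∈ H, f w = 0 := by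
  obtain ⟨f, v, hfC, hfH⟩ := geometric_hahn_banach_open hC.2.1 hC.1 H.convex
    (Set.disjoint_iff_inter_eq_empty.mpr (by rw [Set.inter_comm]; exact hdisj))
  have hH0 : ∀ w ∈ H, f w = 0 := by
    intro w hw
    by_contra h
    have h1 := hfH (((v - 1)/f w) • w) (H.smul_mem _ hw)
    rw [map_smul, smul_eq_mul, div_mul_cancel₀ _ h] at h1
    linarith
  have hv : v ≤ 0 := by simpa using hfH 0 H.zero_mem
  refine ⟨-f, fun w hw => ?_, fun w hw => by simp [hH0 w hw]⟩
  have := hfC w hw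
  simp only [ContinuousLinearMap.neg_apply]
  linarith

private lemma finrank_inf_bound' {d q : ℕ} (H : Fin q → Submodule ℝ (Ed d))
    (hdim : ∀ j, Module.finrank ℝ (H j) = d - 1) :
    d ≤ Module.finrank ℝ (⨅ j, H j : Submodule ℝ (Ed d)) + q := by
  have hEd : Module.finrank ℝ (Ed d) = d := by simp
  have claim : ∀ s : Finset (Fin q),
      d ≤ Module.finrank ℝ (s.inf H : Submodule ℝ (Ed d)) + s.card := by
    intro s
    induction s using Finset.induction_on with
    | empty => show d ≤ Module.finrank ℝ (⊤ : Submodule ℝ (Ed d)) + 0; simp [hEd]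
    | insert _ _ hj ih =>
      rename_i a s'
      rw [Finset.inf_insert, Finset.card_insert_of_notMem hj]
      have e1 := Submodule.finrank_sup_add_finrank_inf_eq (H a) (s'.inf H)
      have e2 : Module.finrank ℝ ↥(H a ⊔ s'.inf H) ≤ d := le_trans (Submodule.finrank_le _) (le_of_eq hEd)
      rw [hdim a] at e1
      omega
  have h1 := claim Finset.univ
  have h2 : (Finset.univ : Finset (Fin q)).inf H = ⨅ j, H j := by
    rw [Finset.inf_eq_iInf]; simp
  rw [h2] at h1
  simpa using h1

set_option maxHeartbeats 2000000 in
/-- If `x ∈ F_Ω(∂S)`, then `L_{S,H}(x) ∈ F_Ω(x)` (in the cone model: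
some nonzero multiple of `L x` lies in the cone face of `x`). -/
theorem stmt_9 {d q : ℕ} (C : Set (Ed d)) (hC : IsProperConeDomain C)
    (u : Fin q → Ed d) (hPES : IsConePESOf C u)
    (H : Fin q → Submodule ℝ (Ed d)) (hH : IsSSupporting C u H)
    (L : Ed d →ₗ[ℝ] Ed d)
    (hL1 : ∀ x ∈ Submodule.span ℝ (Set.range u), L x = x)
    (hL0 : ∀ x ∈ (⨅ j, H j : Submodule ℝ (Ed d)), L x = 0)
    (x : Ed d) (hx : x ∈ ⋃ y ∈ coneSimplexBoundary u, coneFace C y) :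
    ∃ r : ℝ, r ≠ 0 ∧ r • L x ∈ coneFace C x := by
  classical
  obtain ⟨hlin, hsub, -⟩ := hPES
  simp only [Set.mem_iUnion, exists_prop] at hx
  obtain ⟨y, hyA, hyF⟩ := hx
  obtain ⟨t, ht0, -, ⟨j0, hj0⟩, hyeq⟩ := hyA
  subst hyeq
  obtain ⟨hxcl, r, δ, hr, hδ, ha, hb⟩ := hyF
  haveI : Nonempty (Fin q) := ⟨j0⟩
  have hrne : r ≠ 0 := ne_of_gt hr
  -- functionals
  have hfex : ∀ j, ∃ f : Ed d →L[ℝ] ℝ, (∀ w ∈ C, 0 < f w) ∧ ∀ w ∈ H j, f w = 0 :=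
    fun j => exists_functional' hC (hH j).1.2.1
  choose f hfC hfH using hfex
  have hfcl : ∀ j, ∀ w ∈ closure C, 0 ≤ f j w := by
    intro j w hw
    exact closure_minimal (fun v hv => (hfC j v hv).le)
      (isClosed_le continuous_const (f j).continuous) hw
  have huH : ∀ j i, i ≠ j → u i ∈ H j := by
    intro j i hij
    have hmem : ∀ (c : Fin q → ℝ), (∀ k, 0 < c k) →
        (∑ k ∈ Finset.univ.erase j, c k • u k) ∈ H j :=
      fun c hc => (hH j).2 ⟨c, hc, rfl⟩
    have h1 := hmem (fun _ => 1) (fun _ => one_pos)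
    have h2 := hmem (fun k => if k = i then 2 else 1)
      (fun k => by split <;> norm_num)
    have h3 := (H j).sub_mem h2 h1
    have h4 : (∑ k ∈ Finset.univ.erase j, (if k = i then (2:ℝ) else 1) • u k)
        - (∑ k ∈ Finset.univ.erase j, (1:ℝ) • u k)
        = ∑ k ∈ Finset.univ.erase j, (if k = i then (1:ℝ) else 0) • u k := by
      rw [← Finset.sum_sub_distrib]
      refine Finset.sum_congr rfl fun k _ => ?_
      split <;> module
    rw [h4, Finset.sum_eq_single_of_mem i
      (Finset.mem_erase.mpr ⟨hij, Finset.mem_univ i⟩)] at h3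
    · simpa using h3
    · intro b _ hbi; simp [hbi]
  have hfu0 : ∀ j i, i ≠ j → f j (u i) = 0 := fun j i hij => hfH j (u i) (huH j i hij)
  have hsum : ∀ (j : Fin q) (w : Fin q → ℝ), f j (∑ i, w i • u i) = w j * f j (u j) := by
    intro j w
    rw [map_sum, Finset.sum_eq_single j]
    · rw [map_smul, smul_eq_mul]
    · intro b _ hbj; rw [map_smul, hfu0 j b hbj, smul_eq_mul, mul_zero]
    · exact fun h => absurd (Finset.mem_univ j) h
  have hfuj : ∀ j, 0 < f j (u j) := by
    intro j
    have hm : (∑ i, (1:ℝ) • u i) ∈ C := hsub ⟨fun _ => 1, fun _ => one_pos, rfl⟩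
    have h1 := hfC j _ hm
    rw [hsum j (fun _ => 1), one_mul] at h1
    exact h1
  have hEd : Module.finrank ℝ (Ed d) = d := by simp
  -- span u ⊓ ⨅ H = ⊥ and span u ⊔ ⨅ H = ⊤
  have hspan_inf : Submodule.span ℝ (Set.range u) ⊓ (⨅ j, H j) = ⊥ := by
    rw [eq_bot_iff]
    intro w hw
    obtain ⟨hw1, hw2⟩ := Submodule.mem_inf.mp hw
    obtain ⟨c, hc⟩ := (Submodule.mem_span_range_iff_exists_fun ℝ).mp hw1
    have hcz : ∀ j, c j = 0 := by
      intro j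
      have hwH : f j w = 0 := hfH j w ((Submodule.mem_iInf H).mp hw2 j)
      have h0 : c j * f j (u j) = 0 := by rw [← hsum j c, hc, hwH]
      exact (mul_eq_zero.mp h0).resolve_right (ne_of_gt (hfuj j))
    rw [Submodule.mem_bot, ← hc]
    simp [hcz]
  have hsup : Submodule.span ℝ (Set.range u) ⊔ (⨅ j, H j) = ⊤ := by
    apply Submodule.eq_top_of_finrank_eq
    have e1 := Submodule.finrank_sup_add_finrank_inf_eq
      (Submodule.span ℝ (Set.range u)) (⨅ j, H j)
    rw [hspan_inf] at e1
    have e2 : Module.finrank ℝ (Submodule.span ℝ (Set.range u)) = q := by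
      rw [finrank_span_eq_card hlin]; simp
    have e3 := finrank_inf_bound' H (fun j => (hH j).1.1)
    have e4 : Module.finrank ℝ ↥(Submodule.span ℝ (Set.range u) ⊔ ⨅ j, H j) ≤ d :=
      le_trans (Submodule.finrank_le _) (le_of_eq hEd)
    have e5 : Module.finrank ℝ (⊥ : Submodule ℝ (Ed d)) = 0 := finrank_bot ℝ (Ed d)
    rw [hEd]
    omega
  obtain ⟨z, hz, k, hk, hzk⟩ := Submodule.mem_sup.mp (show
    x ∈ Submodule.span ℝ (Set.range u) ⊔ (⨅ j, H j) by rw [hsup]; exact Submodule.mem_top)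
  obtain ⟨c, hc⟩ := (Submodule.mem_span_range_iff_exists_fun ℝ).mp hz
  have hLx : L x = z := by rw [← hzk, map_add, hL1 z hz, hL0 k hk, add_zero]
  have hfk : ∀ j, f j k = 0 := fun j => hfH j k ((Submodule.mem_iInf H).mp hk j)
  have hfx : ∀ j, f j x = c j * f j (u j) := by
    intro j
    rw [← hzk, map_add, hfk, add_zero, ← hc, hsum j c]
  -- scaled points x' = r•x, z' = r•z, coefficients c' = r*c
  obtain ⟨x', hx'⟩ : ∃ x', r • x = x' := ⟨_, rfl⟩
  obtain ⟨z', hz'⟩ : ∃ z', r • z = z' := ⟨_, rfl⟩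
  rw [hx'] at ha hb
  have hx'cl : x' ∈ closure C := hx' ▸ smul_mem_closure' hC hxcl hr
  obtain ⟨c', hc'_def⟩ : ∃ c' : Fin q → ℝ, c' = fun i => r * c i := ⟨_, rfl⟩
  have hc'i : ∀ i, c' i = r * c i := fun i => by rw [hc'_def]
  have hc' : ∑ i, c' i • u i = z' := by
    rw [← hz', ← hc, Finset.smul_sum]
    exact Finset.sum_congr rfl fun i _ => by rw [hc'i i, smul_smul]
  have hfx' : ∀ j, f j x' = c' j * f j (u j) := by
    intro j
    rw [← hx', map_smul, smul_eq_mul, hfx j, hc'i j]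
    ring
  -- sign analysis
  have hfxpos : ∀ j, 0 < t j → 0 < f j x' := by
    intro j htj
    have h0 := hfcl j _ hb
    simp only [map_add, map_smul, map_sub, smul_eq_mul, hsum] at h0
    have hfx0 : 0 ≤ f j x' := hfcl j x' hx'cl
    nlinarith [mul_pos htj (hfuj j), hδ]
  have hfxzero : ∀ j, t j = 0 → f j x' = 0 := by
    intro j htj
    have h0 := hfcl j _ ha
    simp only [map_add, map_smul, map_sub, smul_eq_mul, hsum] at h0
    rw [htj] at h0
    have h1 : 0 ≤ f j x' := hfcl j x' hx'cl
    nlinarith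
  have hcz : ∀ j, t j = 0 → c' j = 0 := by
    intro j htj
    have h1 := hfx' j
    rw [hfxzero j htj] at h1
    exact (mul_eq_zero.mp h1.symm).resolve_right (ne_of_gt (hfuj j))
  have hcpos : ∀ j, 0 < t j → 0 < c' j := by
    intro j htj
    have h1 := hfxpos j htj
    rw [hfx' j] at h1
    nlinarith [hfuj j]
  have hcnn : ∀ j, 0 ≤ c' j := fun j => (ht0 j).lt_or_eq.elim
    (fun h => (hcpos j h).le) (fun h => (hcz j h.symm).symm.le)
  have hz'cl : z' ∈ closure C := by rw [← hc']; exact sum_mem_closure' hsub hcnn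
  -- bounds
  obtain ⟨B, hB_def⟩ : ∃ B : ℝ, B = Finset.univ.inf' Finset.univ_nonempty
    (fun i => if c' i ≤ t i then 1 else t i / (c' i - t i)) := ⟨_, rfl⟩
  have hB0 : 0 < B := by
    rw [hB_def, Finset.lt_inf'_iff]
    intro i _
    split
    · exact one_pos
    · rename_i h
      push_neg at h
      have hti : 0 < t i := by
        rcases (ht0 i).lt_or_eq with h2 | h2
        · exact h2
        · have := hcz i h2.symm; linarith
      exact div_pos hti (by linarith)
  have hBle : ∀ i, 0 ≤ t i + B * (t i - c' i) := by
    intro i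
    by_cases h : c' i ≤ t i
    · nlinarith [hB0, ht0 i]
    · push_neg at h
      have hBi : B ≤ t i / (c' i - t i) := by
        have h5 := Finset.inf'_le (b := i)
          (fun i => if c' i ≤ t i then 1 else t i / (c' i - t i)) (Finset.mem_univ i)
        rw [if_neg (not_le.mpr h)] at h5
        rw [hB_def]; exact h5
      have hpos : (0:ℝ) < c' i - t i := by linarith
      have h6 := (le_div_iff₀ hpos).mp hBi
      nlinarith
  obtain ⟨B', hB'_def⟩ : ∃ B' : ℝ, B' = Finset.univ.inf' Finset.univ_nonempty
    (fun i => if t i ≤ c' i then 1 else c' i / (t i - c' i)) := ⟨_, rfl⟩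
  have hB'0 : 0 < B' := by
    rw [hB'_def, Finset.lt_inf'_iff]
    intro i _
    split
    · exact one_pos
    · rename_i h
      push_neg at h
      have hci : 0 < c' i := by
        rcases (hcnn i).lt_or_eq with h2 | h2
        · exact h2
        · have := hcpos i (by linarith); linarith
      exact div_pos hci (by linarith)
  have hB'le : ∀ b : ℝ, 0 ≤ b → b ≤ B' → ∀ i, 0 ≤ c' i + b * (c' i - t i) := by
    intro b hb0 hbB i
    by_cases h : t i ≤ c' i
    · nlinarith [hcnn i]
    · push_neg at h
      have hBi : B' ≤ c' i / (t i - c' i) := by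
        have h5 := Finset.inf'_le (b := i)
          (fun i => if t i ≤ c' i then 1 else c' i / (t i - c' i)) (Finset.mem_univ i)
        rw [if_neg (not_le.mpr h)] at h5
        rw [hB'_def]; exact h5
      have hpos : (0:ℝ) < t i - c' i := by linarith
      have h6 := (le_div_iff₀ hpos).mp (hbB.trans hBi)
      nlinarith
  -- auxiliary points in closure C
  have hw1 : (∑ i, t i • u i) + B • ((∑ i, t i • u i) - z') ∈ closure C := by
    have heq : (∑ i, t i • u i) + B • ((∑ i, t i • u i) - z')
        = ∑ i, (t i + B * (t i - c' i)) • u i := by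
      rw [← hc', smul_sub, Finset.smul_sum, Finset.smul_sum, ← Finset.sum_sub_distrib,
        ← Finset.sum_add_distrib]
      exact Finset.sum_congr rfl fun i _ => by module
    rw [heq]
    exact sum_mem_closure' hsub hBle
  have hw2 : ∀ b : ℝ, 0 ≤ b → b ≤ B' → z' + b • (z' - ∑ i, t i • u i) ∈ closure C := by
    intro b hb0 hbB
    have heq : z' + b • (z' - ∑ i, t i • u i) = ∑ i, (c' i + b * (c' i - t i)) • u i := by
      rw [← hc', smul_sub, Finset.smul_sum, Finset.smul_sum, ← Finset.sum_sub_distrib,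
        ← Finset.sum_add_distrib]
      exact Finset.sum_congr rfl fun i _ => by module
    rw [heq]
    exact sum_mem_closure' hsub (hB'le b hb0 hbB)
  -- claim 1 : x' + (l*B) • (x' - z') ∈ closure C
  obtain ⟨l, hl_def⟩ : ∃ l : ℝ, l = min (1/2) (δ / (2 * (1 + B))) := ⟨_, rfl⟩
  have hl0 : 0 < l := by rw [hl_def]; exact lt_min (by norm_num) (by positivity)
  have hl2 : l ≤ 1/2 := by rw [hl_def]; exact min_le_left _ _
  have hlδ : l ≤ δ / (2 * (1 + B)) := by rw [hl_def]; exact min_le_right _ _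
  have hδ'0 : 0 < l * B := mul_pos hl0 hB0
  obtain ⟨α, hα_def⟩ : ∃ α : ℝ, α = (l + l * B) / (1 - l) := ⟨_, rfl⟩
  have h1l : (0:ℝ) < 1 - l := by linarith
  have hα_eq : α * (1 - l) = l + l * B := by rw [hα_def]; exact div_mul_cancel₀ _ (ne_of_gt h1l)
  have hα0 : 0 < α := by rw [hα_def]; exact div_pos (by nlinarith) h1l
  have hlB : l * (1 + B) ≤ δ / 2 := by
    have h1B : (0:ℝ) < 1 + B := by linarith
    have h7 := mul_le_mul_of_nonneg_right hlδ h1B.le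
    have h8 : δ / (2 * (1 + B)) * (1 + B) = δ / 2 := by
      field_simp
    rw [h8] at h7; linarith
  have hα_le : α ≤ δ := by
    have h2 : α ≤ (l + l * B) / (1/2) := by
      rw [hα_def]
      exact div_le_div_of_nonneg_left (by nlinarith) (by norm_num) (by linarith)
    have h3 : (l + l * B) / (1/2) = 2 * (l + l * B) := by ring
    nlinarith
  have ha' : x' + α • (x' - ∑ i, t i • u i) ∈ closure C := shrink' hC hx'cl hb hα0.le hα_le
  have claim1 : x' + (l * B) • (x' - z') ∈ closure C := by
    have key : (1 - l) • (x' + α • (x' - ∑ i, t i • u i))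
        + l • ((∑ i, t i • u i) + B • ((∑ i, t i • u i) - z'))
        = x' + (l * B) • (x' - z') := by
      match_scalars
      · linear_combination hα_eq
      · linear_combination -hα_eq
      · ring
    rw [← key]
    exact hC.2.1.closure ha' hw1 h1l.le hl0.le (by ring)
  -- claim 2 : z' + (μ*δ) • (z' - x') ∈ closure C
  obtain ⟨μ, hμ_def⟩ : ∃ μ : ℝ, μ = min (1/2) (B' / (2 * (1 + δ))) := ⟨_, rfl⟩
  have hμ0 : 0 < μ := by rw [hμ_def]; exact lt_min (by norm_num) (by positivity)
  have hμ2 : μ ≤ 1/2 := by rw [hμ_def]; exact min_le_left _ _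
  have hμB : μ ≤ B' / (2 * (1 + δ)) := by rw [hμ_def]; exact min_le_right _ _
  have hδ''0 : 0 < μ * δ := mul_pos hμ0 hδ
  obtain ⟨β, hβ_def⟩ : ∃ β : ℝ, β = (μ + μ * δ) / (1 - μ) := ⟨_, rfl⟩
  have h1μ : (0:ℝ) < 1 - μ := by linarith
  have hβ_eq : β * (1 - μ) = μ + μ * δ := by rw [hβ_def]; exact div_mul_cancel₀ _ (ne_of_gt h1μ)
  have hβ0 : 0 < β := by rw [hβ_def]; exact div_pos (by nlinarith) h1μ
  have hμδ : μ * (1 + δ) ≤ B' / 2 := by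
    have h1B : (0:ℝ) < 1 + δ := by linarith
    have h7 := mul_le_mul_of_nonneg_right hμB h1B.le
    have h8 : B' / (2 * (1 + δ)) * (1 + δ) = B' / 2 := by
      field_simp
    rw [h8] at h7; linarith
  have hβ_le : β ≤ B' := by
    have h2 : β ≤ (μ + μ * δ) / (1/2) := by
      rw [hβ_def]
      exact div_le_div_of_nonneg_left (by nlinarith) (by norm_num) (by linarith)
    have h3 : (μ + μ * δ) / (1/2) = 2 * (μ + μ * δ) := by ring
    nlinarith
  have hw2' : z' + β • (z' - ∑ i, t i • u i) ∈ closure C := hw2 β hβ0.le hβ_le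
  have claim2 : z' + (μ * δ) • (z' - x') ∈ closure C := by
    have key : (1 - μ) • (z' + β • (z' - ∑ i, t i • u i))
        + μ • ((∑ i, t i • u i) + δ • ((∑ i, t i • u i) - x'))
        = z' + (μ * δ) • (z' - x') := by
      match_scalars
      · linear_combination hβ_eq
      · linear_combination -hβ_eq
      · ring
    rw [← key]
    exact hC.2.1.closure hw2' ha h1μ.le hμ0.le (by ring)
  -- shrink to common δ and rescale by 1/r
  obtain ⟨e, he_def⟩ : ∃ e : ℝ, e = min (l * B) (μ * δ) := ⟨_, rfl⟩
  have he0 : 0 < e := by rw [he_def]; exact lt_min hδ'0 hδ''0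
  have he1 : e ≤ l * B := by rw [he_def]; exact min_le_left _ _
  have he2 : e ≤ μ * δ := by rw [he_def]; exact min_le_right _ _
  have hxe' : x' + e • (x' - z') ∈ closure C := shrink' hC hx'cl claim1 he0.le he1
  have hze' : z' + e • (z' - x') ∈ closure C := shrink' hC hz'cl claim2 he0.le he2
  have hinv : (0:ℝ) < 1/r := by positivity
  have hr1 : 1/r * r = 1 := one_div_mul_cancel hrne
  have hxe : x + e • (x - z) ∈ closure C := by
    have h9 := smul_mem_closure' hC hxe' hinv
    have h10 : (1/r) • (x' + e • (x' - z')) = x + e • (x - z) := by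
      rw [← hx', ← hz']
      match_scalars
      · linear_combination (1 + e) * hr1
      · linear_combination (-e) * hr1
    rw [h10] at h9
    exact h9
  have hze : z + e • (z - x) ∈ closure C := by
    have h9 := smul_mem_closure' hC hze' hinv
    have h10 : (1/r) • (z' + e • (z' - x')) = z + e • (z - x) := by
      rw [← hx', ← hz']
      match_scalars
      · linear_combination (1 + e) * hr1
      · linear_combination (-e) * hr1
    rw [h10] at h9
    exact h9
  have hzcl : z ∈ closure C := by
    have h9 := smul_mem_closure' hC hz'cl hinv
    rw [← hz', smul_smul, hr1, one_smul] at h9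
    exact h9
  refine ⟨1, one_ne_zero, ?_⟩
  rw [one_smul, hLx]
  exact ⟨hzcl, 1, e, one_pos, he0, by simpa using hxe, by simpa using hze⟩
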